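/- Let C: W_0 → … → W_t be a reduced computation of the S-machine LR(Y) with the standard base Q^{(1)} P Q^{(2)}. Then: (4) if W_0 ≡ q^{(1)} u p^{(1)} q^{(2)} and W_t ≡ q^{(1)} v p^{(1)} q^{(2)} for some words u, v, or W_0 ≡ q^{(1)} u p^{(2)} q^{(2)} and W_t ≡ q^{(1)} v p^{(2)} q^{(2)}, then u ≡ v and the computation is empty (t = 0); (5) if W_0 has one of the forms q^{(1)} u p^{(1)} q^{(2)}, q^{(1)} p^{(1)} u q^{(2)}, q^{(1)} u p^{(2)} q^{(2)}, q^{(1)} p^{(2)} u q^{(2)} for some word u, then |W_i|_Y ≥ |W_0|_Y for every i = 0, …, t. -/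
import Mathlib


namespace LR

/-- The rules of the `S`-machine `LR(Y)`: `z1 a = ζ⁽¹⁾(a)`, `z12 = ζ⁽¹²⁾` and
`z2 a = ζ⁽²⁾(a)`.  A signed rule `(r, ε) : LRRule Y × Bool` is the rule `r` if
`ε = true` and its inverse if `ε = false`. -/
inductive LRRule (Y : Type) : Type
  | z1 : Y → LRRule Y
  | z12 : LRRule Y
  | z2 : Y → LRRule Y

/-- A configuration of `LR(Y)` with the standard base `Q⁽¹⁾ P Q⁽²⁾`:
`st = false` means the running state letter is `p⁽¹⁾`, `st = true` means it is `p⁽²⁾`;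
`uL` is the tape word of the `Q⁽¹⁾P`-sector (a reduced word in `Y⁽¹⁾`, identified
with `Y`), and `uR` is the tape word of the `PQ⁽²⁾`-sector (a reduced word in `Y⁽²⁾`,
identified with `Y` via `a ↦ a'`). -/
structure Config (Y : Type) where
  st : Bool
  uL : FreeGroup Y
  uR : FreeGroup Y

variable {Y : Type}

/-- the `Y`-length `|W|_Y` of a configuration -/
def lenY [DecidableEq Y] (W : Config Y) : ℕ :=
  W.uL.toWord.length + W.uR.toWord.length

/-- One application of a (signed) rule of `LR(Y)`. -/
def Step (r : LRRule Y × Bool) (W W' : Config Y) : Prop :=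
  match r with
  | (LRRule.z1 a, true) => W.st = false ∧ W'.st = false ∧
      W'.uL = W.uL * (FreeGroup.of a)⁻¹ ∧ W'.uR = FreeGroup.of a * W.uR
  | (LRRule.z1 a, false) => W.st = false ∧ W'.st = false ∧
      W'.uL = W.uL * FreeGroup.of a ∧ W'.uR = (FreeGroup.of a)⁻¹ * W.uR
  | (LRRule.z12, true) => W.st = false ∧ W.uL = 1 ∧
      W'.st = true ∧ W'.uL = 1 ∧ W'.uR = W.uR
  | (LRRule.z12, false) => W.st = true ∧ W.uL = 1 ∧
      W'.st = false ∧ W'.uL = 1 ∧ W'.uR = W.uR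
  | (LRRule.z2 a, true) => W.st = true ∧ W'.st = true ∧
      W'.uL = W.uL * FreeGroup.of a ∧ W'.uR = (FreeGroup.of a)⁻¹ * W.uR
  | (LRRule.z2 a, false) => W.st = true ∧ W'.st = true ∧
      W'.uL = W.uL * (FreeGroup.of a)⁻¹ ∧ W'.uR = FreeGroup.of a * W.uR

end LR

namespace LRPrimAux

open LR

variable {Y : Type}

/-- the letter by which `uR` gets multiplied on the left (`none` for `z12`) -/
def ltr : LRRule Y × Bool → Option (Y × Bool)
  | (LRRule.z1 a, e) => some (a, e)
  | (LRRule.z2 a, e) => some (a, !e)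
  | (LRRule.z12, _) => none

lemma mk_true (a : Y) : FreeGroup.mk [(a, true)] = FreeGroup.of a := rfl

lemma mk_false (a : Y) : FreeGroup.mk [(a, false)] = (FreeGroup.of a)⁻¹ := by
  rw [← mk_true, FreeGroup.inv_mk]; rfl

lemma step_prod {r : LRRule Y × Bool} {A B : Config Y} (h : Step r A B) :
    B.uL * B.uR = A.uL * A.uR := by
  obtain ⟨rk, ek⟩ := r
  cases rk <;> cases ek <;>
    first
      | (obtain ⟨h1, h2, h3, h4, h5⟩ := h; rw [h4, h5, h2])
      | (obtain ⟨h1, h2, h3, h4⟩ := h; rw [h3, h4]; group)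

lemma step_some {r : LRRule Y × Bool} {A B : Config Y} (h : Step r A B)
    {c : Y × Bool} (hc : ltr r = some c) :
    B.st = A.st ∧ B.uR = FreeGroup.mk [c] * A.uR := by
  obtain ⟨rk, ek⟩ := r
  cases rk <;> cases ek <;> simp only [ltr, Option.some.injEq,
      reduceCtorEq] at hc <;>
    obtain ⟨h1, h2, h3, h4⟩ := h <;> subst hc <;>
    simp [mk_true, mk_false, h1, h2, h4]

lemma step_none {r : LRRule Y × Bool} {A B : Config Y} (h : Step r A B)
    (hc : ltr r = none) :
    A.uL = 1 ∧ B.uL = 1 ∧ B.uR = A.uR ∧ A.st = !r.2 ∧ B.st = r.2 := by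
  obtain ⟨rk, ek⟩ := r
  cases rk <;> cases ek <;> simp only [ltr, reduceCtorEq] at hc
  all_goals (obtain ⟨h1, h2, h3, h4, h5⟩ := h; simp_all)

lemma ltr_none_iff (r : LRRule Y × Bool) : ltr r = none ↔ r.1 = LRRule.z12 := by
  obtain ⟨rk, ek⟩ := r; cases rk <;> simp [ltr]

lemma key_cons [DecidableEq Y] (c : Y × Bool) (x : FreeGroup Y)
    (h : ∀ d ∈ x.toWord.head?, ¬(c.1 = d.1 ∧ c.2 = !d.2)) :
    (FreeGroup.mk [c] * x).toWord = c :: x.toWord := by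
  conv_lhs => rw [← FreeGroup.mk_toWord (x := x), FreeGroup.mul_mk]
  rw [FreeGroup.toWord_mk, List.singleton_append, FreeGroup.reduce.cons,
    FreeGroup.reduce_toWord]
  cases hx : x.toWord with
  | nil => rfl
  | cons d L =>
    have hd := h d (by rw [hx]; rfl)
    simp [hd]

end LRPrimAux

namespace LRPrimAux

open LR

variable {Y : Type}

lemma step_z1 {a : Y} {e : Bool} {A B : Config Y} (h : Step (LRRule.z1 a, e) A B) :
    A.st = false ∧ B.st = false := by cases e <;> exact ⟨h.1, h.2.1⟩

lemma step_z2 {a : Y} {e : Bool} {A B : Config Y} (h : Step (LRRule.z2 a, e) A B) :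
    A.st = true ∧ B.st = true := by cases e <;> exact ⟨h.1, h.2.1⟩

end LRPrimAux

open LRPrimAux

open LR in
/-- Lemma `prim` (4), (5): in a reduced computation of `LR(Y)` with the standard base,
(4) if `W₀ ≡ q⁽¹⁾ u p⁽ʲ⁾ q⁽²⁾` and `W_t ≡ q⁽¹⁾ v p⁽ʲ⁾ q⁽²⁾` with the same `p`-letter,
then `u ≡ v` and the computation is empty (`t = 0`); (5) if `W₀` has one of the forms
`q⁽¹⁾ u p⁽ʲ⁾ q⁽²⁾` or `q⁽¹⁾ p⁽ʲ⁾ u q⁽²⁾` (`j = 1, 2`), then `|W_i|_Y ≥ |W₀|_Y` for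
every `i`. -/
theorem lr_prim_same_state_and_min {Y : Type} [DecidableEq Y]
    (t : ℕ) (W : Fin (t + 1) → Config Y) (hist : Fin t → LRRule Y × Bool)
    (hstep : ∀ i : Fin t, Step (hist i) (W i.castSucc) (W i.succ))
    (hred : ∀ (i : ℕ) (hi : i + 1 < t),
      hist ⟨i + 1, hi⟩ ≠ ((hist ⟨i, by omega⟩).1, !(hist ⟨i, by omega⟩).2)) :
    -- (4)
    ((W 0).st = (W (Fin.last t)).st ∧ (W 0).uR = 1 ∧ (W (Fin.last t)).uR = 1 →
      t = 0 ∧ (W 0).uL = (W (Fin.last t)).uL) ∧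
    -- (5)
    ((W 0).uL = 1 ∨ (W 0).uR = 1 →
      ∀ i : Fin (t + 1), lenY (W 0) ≤ lenY (W i)) := by
  classical
  set V : ℕ → Config Y :=
    fun n => W ⟨min n t, Nat.lt_succ_of_le (min_le_right n t)⟩ with hVdef
  set R : ℕ → LRRule Y × Bool :=
    fun n => if h : n < t then hist ⟨n, h⟩ else (LRRule.z12, true) with hRdef
  have hV : ∀ n (h : n ≤ t), V n = W ⟨n, Nat.lt_succ_of_le h⟩ := by
    intro n h
    simp only [hVdef]
    congr 1
    exact Fin.ext (Nat.min_eq_left h)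
  have hR : ∀ n (h : n < t), R n = hist ⟨n, h⟩ := by
    intro n h
    simp only [hRdef]
    rw [dif_pos h]
  have hV0 : V 0 = W 0 := by
    rw [hV 0 (Nat.zero_le t)]
    congr 1
  have hVt : V t = W (Fin.last t) := by
    rw [hV t le_rfl]; rfl
  have hstep' : ∀ n, n < t → Step (R n) (V n) (V (n + 1)) := by
    intro n h
    rw [hV n h.le, hV (n + 1) h, hR n h]
    exact hstep ⟨n, h⟩
  have hred' : ∀ n, n + 1 < t → R (n + 1) ≠ ((R n).1, !(R n).2) := by
    intro n h
    rw [hR (n + 1) h, hR n (by omega)]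
    exact hred n h
  -- invariance of the product uL * uR
  have hprod : ∀ k, k ≤ t → (V k).uL * (V k).uR = (V 0).uL * (V 0).uR := by
    intro k hk
    induction k with
    | zero => rfl
    | succ k ih => exact (step_prod (hstep' k (by omega))).trans (ih (by omega))
  -- the state is constant on z12-free intervals
  have hstc : ∀ a d, a + d ≤ t → (∀ k, a ≤ k → k < a + d → (ltr (R k)).isSome) →
      (V (a + d)).st = (V a).st := by
    intro a d
    induction d with
    | zero => intro _ _; rfl
    | succ d ih =>
      intro h1 h2
      obtain ⟨c, hc⟩ := Option.isSome_iff_exists.mp (h2 (a + d) (by omega) (by omega))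
      have hs := (step_some (hstep' (a + d) (by omega)) hc).1
      exact hs.trans (ih (by omega) (fun k hk hk2 => h2 k hk (by omega)))
  -- no cancellation between letters of consecutive non-z12 rules
  have hnc : ∀ k, k + 1 < t → ∀ c c', ltr (R k) = some c → ltr (R (k + 1)) = some c' →
      ¬(c'.1 = c.1 ∧ c'.2 = !c.2) := by
    intro k hk c c' hc hc'
    have hs1 := hstep' k (by omega)
    have hs2 := hstep' (k + 1) hk
    have hrr := hred' k hk
    rcases hR1 : R k with ⟨r1, e1⟩
    rcases hR2 : R (k + 1) with ⟨r2, e2⟩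
    rw [hR1] at hc hs1 hrr
    rw [hR2] at hc' hs2 hrr
    cases r1 with
    | z12 => simp [ltr] at hc
    | z1 a1 =>
      cases r2 with
      | z12 => simp [ltr] at hc'
      | z2 a2 => exact absurd ((step_z1 hs1).2.symm.trans (step_z2 hs2).1) (by simp)
      | z1 a2 =>
        simp only [ltr, Option.some.injEq] at hc hc'
        subst hc; subst hc'
        rintro ⟨hfst, hsnd⟩
        exact hrr (by rw [show a2 = a1 from hfst, show e2 = !e1 from hsnd])
    | z2 a1 =>
      cases r2 with
      | z12 => simp [ltr] at hc'
      | z1 a2 => exact absurd ((step_z2 hs1).2.symm.trans (step_z1 hs2).1) (by simp)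
      | z2 a2 =>
        simp only [ltr, Option.some.injEq] at hc hc'
        subst hc; subst hc'
        rintro ⟨hfst, hsnd⟩
        have hsnd' : (!e2) = !!e1 := hsnd
        rw [Bool.not_not] at hsnd'
        have h2 : e2 = !e1 := by rw [← hsnd', Bool.not_not]
        exact hrr (by rw [show a2 = a1 from hfst, h2])
  -- key lemma: on a z12-free block, uR changes
  have block : ∀ a b, a < b → b ≤ t → (∀ k, a ≤ k → k < b → (ltr (R k)).isSome) →
      (V b).uR ≠ (V a).uR := by
    intro a b hab hbt hblk
    have main : ∀ k, a + 1 ≤ k → k ≤ b →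
        ((V k).uR * ((V a).uR)⁻¹).toWord.length = k - a ∧
        ((V k).uR * ((V a).uR)⁻¹).toWord.head? = ltr (R (k - 1)) := by
      intro k hk1
      induction k, hk1 using Nat.le_induction with
      | base =>
        intro _
        obtain ⟨c, hc⟩ := Option.isSome_iff_exists.mp (hblk a le_rfl (by omega))
        have h2 := (step_some (hstep' a (by omega)) hc).2
        rw [h2, mul_inv_cancel_right]
        constructor
        · rw [FreeGroup.toWord_mk, FreeGroup.reduce_singleton]
          simp
        · rw [FreeGroup.toWord_mk, FreeGroup.reduce_singleton]
          simp [hc]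
      | succ k hk ih =>
        intro hkb
        obtain ⟨hlen, hhead⟩ := ih (by omega)
        obtain ⟨c, hc⟩ := Option.isSome_iff_exists.mp (hblk (k - 1) (by omega) (by omega))
        obtain ⟨c', hc'⟩ := Option.isSome_iff_exists.mp (hblk k (by omega) (by omega))
        have h2 := (step_some (hstep' k (by omega)) hc').2
        have hv : (V (k + 1)).uR * ((V a).uR)⁻¹
            = FreeGroup.mk [c'] * ((V k).uR * ((V a).uR)⁻¹) := by
          rw [h2, mul_assoc]
        have e1 : k - 1 + 1 = k := by omega
        have hNC := hnc (k - 1) (by omega) c c' hc (by rw [e1]; exact hc')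
        have hcons := key_cons c' ((V k).uR * ((V a).uR)⁻¹) (by
          intro d hd
          rw [hhead, hc] at hd
          simp only [Option.mem_def, Option.some.injEq] at hd
          subst hd
          exact hNC)
        rw [hv, hcons]
        constructor
        · simp only [List.length_cons, hlen]
          omega
        · simp [hc']
    intro he
    have hfin := (main b (by omega) le_rfl).1
    rw [he] at hfin
    have h1 : (V a).uR * ((V a).uR)⁻¹ = 1 := by group
    rw [h1] at hfin
    simp only [FreeGroup.toWord_one, List.length_nil] at hfin
    omega
  constructor
  · -- part (4)
    rintro ⟨hst, h0, hT⟩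
    have ht0 : t = 0 := by
      by_contra ht0
      have hst' : (V 0).st = (V t).st := by rw [hV0, hVt]; exact hst
      have h0' : (V 0).uR = 1 := by rw [hV0]; exact h0
      have hT' : (V t).uR = 1 := by rw [hVt]; exact hT
      by_cases hex : ∃ k, k < t ∧ ltr (R k) = none
      · obtain ⟨i, ⟨hit, hiz⟩, hmin⟩ :
            ∃ i, (i < t ∧ ltr (R i) = none) ∧ ∀ k < i, ¬(k < t ∧ ltr (R k) = none) :=
          ⟨Nat.find hex, Nat.find_spec hex, fun k hk => Nat.find_min hex hk⟩
        have hisome : ∀ k, k < i → (ltr (R k)).isSome := by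
          intro k hk
          have h := hmin k hk
          push_neg at h
          exact Option.isSome_iff_ne_none.mpr (h (by omega))
        have hsti : (V i).st = (V 0).st := by
          have := hstc 0 i (by omega) (fun k hk1 hk2 => hisome k (by omega))
          simpa using this
        have hz := step_none (hstep' i hit) hiz
        have hex2 : ∃ j, i < j ∧ j < t ∧ ltr (R j) = none := by
          by_contra hno
          push_neg at hno
          have hsome2 : ∀ k, i + 1 ≤ k → k < t → (ltr (R k)).isSome :=
            fun k h1 h2 => Option.isSome_iff_ne_none.mpr (hno k (by omega) h2)
          have hT2 : (V t).st = (V (i + 1)).st := by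
            have := hstc (i + 1) (t - (i + 1)) (by omega)
              (fun k hk1 hk2 => hsome2 k hk1 (by omega))
            rwa [show i + 1 + (t - (i + 1)) = t from by omega] at this
          rw [hz.2.2.2.2] at hT2
          have hcontr : (!(R i).2) = (R i).2 := by
            rw [← hz.2.2.2.1, hsti, hst', hT2]
          simp at hcontr
        obtain ⟨j, ⟨hij, hjt, hjz⟩, hjmin⟩ :
            ∃ j, (i < j ∧ j < t ∧ ltr (R j) = none) ∧
              ∀ k < j, ¬(i < k ∧ k < t ∧ ltr (R k) = none) :=
          ⟨Nat.find hex2, Nat.find_spec hex2, fun k hk => Nat.find_min hex2 hk⟩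
        have hijsome : ∀ k, i + 1 ≤ k → k < j → (ltr (R k)).isSome := by
          intro k h1 h2
          have h := hjmin k h2
          push_neg at h
          exact Option.isSome_iff_ne_none.mpr (h (by omega) (by omega))
        have hzj := step_none (hstep' j hjt) hjz
        have hi1j : i + 1 < j := by
          rcases Nat.lt_or_ge (i + 1) j with h | h
          · exact h
          · have hj_eq : j = i + 1 := by omega
            have hri : (R i).1 = LRRule.z12 := (ltr_none_iff _).mp hiz
            have hrj : (R j).1 = LRRule.z12 := (ltr_none_iff _).mp hjz
            have hrr := hred' i (by omega)
            have h1 : (V (i + 1)).st = (R i).2 := hz.2.2.2.2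
            have h2 : (V j).st = !(R j).2 := hzj.2.2.2.1
            rw [hj_eq] at h2 hrj
            have hb : (!(R (i + 1)).2) = (R i).2 := by rw [← h2, h1]
            exact absurd (Prod.ext_iff.mpr ⟨by rw [hrj, hri], by rw [← hb]; simp⟩) hrr
        have hL1 : (V (i + 1)).uR = (V j).uR := by
          have p1 := hprod (i + 1) (by omega)
          have p2 := hprod j (by omega)
          rw [hz.2.1, one_mul] at p1
          rw [hzj.1, one_mul] at p2
          rw [p1, p2]
        exact block (i + 1) j hi1j (by omega) hijsome hL1.symm
      · push_neg at hex
        exact block 0 t (by omega) le_rfl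
          (fun k _ hk => Option.isSome_iff_ne_none.mpr (hex k hk))
          (hT'.trans h0'.symm)
    refine ⟨ht0, ?_⟩
    subst ht0
    rfl
  · -- part (5)
    intro h i
    have hle : (i : ℕ) ≤ t := Nat.lt_succ_iff.mp i.isLt
    have hWi : W i = V (i : ℕ) := by
      rw [hV (i : ℕ) hle]
    rw [hWi, ← hV0]
    have hp := hprod (i : ℕ) hle
    have hlen : ((V 0).uL * (V 0).uR).toWord.length ≤ lenY (V (i : ℕ)) := by
      rw [← hp]
      calc ((V (i : ℕ)).uL * (V (i : ℕ)).uR).toWord.length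
          ≤ ((V (i : ℕ)).uL.toWord ++ (V (i : ℕ)).uR.toWord).length :=
            List.Sublist.length_le (FreeGroup.toWord_mul_sublist _ _)
        _ = lenY (V (i : ℕ)) := by simp [lenY]
    refine le_trans ?_ hlen
    rcases h with h1 | h1
    · have h1' : (V 0).uL = 1 := by rw [hV0]; exact h1
      simp [lenY, h1']
    · have h1' : (V 0).uR = 1 := by rw [hV0]; exact h1
      simp [lenY, h1']
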